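/- For any R-algebra A with R finite-dimensional semisimple, the relative de Rham complex Ω•_R A (the tensor algebra of Ω¹_R A over A with differential d) is acyclic in positive degrees: for every k ≥ 1, the closed k-forms coincide with the exact ones, i.e. ker(d: Ω^k_R A → Ω^{k+1}_R A) = d(Ω^{k-1}_R A). -/

import Mathlib

open TensorProduct

universe u

/-
The trace form `(u, v) ↦ tr(w ↦ u v w)` of a finite-dimensional semisimple algebra `R` over a
field of characteristic zero is nondegenerate: an idempotent with trace zero vanishes. For dual
bases `bᵢ, cᵢ` of this form, `∑ bᵢ ⊗ cᵢ` is a separability idempotent of `R`, and averaging a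
`k`-linear retraction `A → f(R)` against it gives an `R`-bimodule retraction `ε`. The operator
`h(a₀ da₁ ⋯ daₙ) = ε(a₀) (a₁ - ε a₁) da₂ ⋯ daₙ` is then well defined on `Ω^n_R A`, and
`d h + h d = id` in positive degrees, so every closed form of positive degree is exact.
-/

noncomputable section
namespace Algebra

variable (k R : Type*) [Field k] [Ring R] [Algebra k R]

def regularTraceForm : LinearMap.BilinForm k R :=
  (LinearMap.mul k R).compr₂ (LinearMap.trace k R ∘ₗ (Algebra.lmul k R).toLinearMap)

variable {k R}

theorem regularTraceForm_apply (u v : R) :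
    regularTraceForm k R u v = LinearMap.trace k R (Algebra.lmul k R (u * v)) := rfl

theorem regularTraceForm_comm [FiniteDimensional k R] (u v : R) :
    regularTraceForm k R u v = regularTraceForm k R v u := by
  simp only [regularTraceForm_apply, map_mul, Module.End.mul_eq_comp]
  exact LinearMap.trace_comp_comm' _ _

theorem regularTraceForm_mul_left (u v w : R) :
    regularTraceForm k R (u * v) w = regularTraceForm k R u (v * w) := by
  simp only [regularTraceForm_apply, mul_assoc]

theorem regularTraceForm_nondegenerate [CharZero k] [FiniteDimensional k R]
    [IsSemisimpleRing R] : (regularTraceForm k R).Nondegenerate := by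
  refine LinearMap.BilinForm.Nondegenerate.ofSeparatingLeft fun v hv => ?_
  obtain ⟨e, he, hspan⟩ := IsSemisimpleRing.ideal_eq_span_idempotent (Ideal.span {v})
  obtain ⟨r, rfl⟩ : ∃ r, r * v = e :=
    Ideal.mem_span_singleton'.1 (hspan ▸ Ideal.mem_span_singleton_self e)
  have htrace : LinearMap.trace k R (Algebra.lmul k R (r * v)) = 0 := by
    rw [← regularTraceForm_apply, regularTraceForm_comm, hv]
  have hlmul : Algebra.lmul k R (r * v) = 0 :=
    LinearMap.IsIdempotentElem.eq_zero_of_trace_eq_zero (he.map (Algebra.lmul k R)) htrace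
  have he0 : r * v = 0 := by simpa using LinearMap.congr_fun hlmul 1
  rw [he0, Ideal.span_singleton_eq_bot.2 rfl] at hspan
  exact Ideal.span_singleton_eq_bot.1 hspan

end Algebra

namespace LinearMap.BilinForm

variable {k R ι : Type*} [Field k] [Ring R] [Algebra k R] [Fintype ι] [DecidableEq ι]
  {B : LinearMap.BilinForm k R}

theorem repr_eq_apply_dualBasis (hB : B.Nondegenerate) (b : Module.Basis ι k R) (v : R) (j : ι) :
    b.repr v j = B (B.dualBasis hB b j) v :=
  calc b.repr v j = (B.flip.dualBasis hB.flip (B.dualBasis hB b)).repr v j := by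
        rw [dualBasis_flip_dualBasis]
    _ = B (B.dualBasis hB b j) v := dualBasis_repr_apply _ _ _ _

theorem sum_mul_tmul_dualBasis (hB : B.Nondegenerate)
    (hassoc : ∀ u v w, B (u * v) w = B u (v * w)) (b : Module.Basis ι k R) (s : R) :
    ∑ i, (s * b i) ⊗ₜ[k] B.dualBasis hB b i = ∑ i, b i ⊗ₜ[k] (B.dualBasis hB b i * s) := by
  set c := B.dualBasis hB b
  have expand_b (v : R) : ∑ j, B (c j) v • b j = v := by
    simpa only [repr_eq_apply_dualBasis hB] using b.sum_repr v
  have expand_c (v : R) : ∑ j, B v (b j) • c j = v := by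
    conv_rhs => rw [← c.sum_repr v]
    simp [c]
  calc ∑ i, (s * b i) ⊗ₜ[k] c i = ∑ i, ∑ j, B (c j) (s * b i) • (b j ⊗ₜ[k] c i) := by
        refine Finset.sum_congr rfl fun i _ => ?_
        conv_lhs => rw [← expand_b (s * b i)]
        simp only [TensorProduct.sum_tmul, TensorProduct.smul_tmul']
    _ = ∑ j, ∑ i, B (c j * s) (b i) • (b j ⊗ₜ[k] c i) := by
        rw [Finset.sum_comm]
        simp only [hassoc]
    _ = ∑ j, b j ⊗ₜ[k] (c j * s) := by
        refine Finset.sum_congr rfl fun j _ => ?_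
        conv_rhs => rw [← expand_c (c j * s)]
        simp only [TensorProduct.tmul_sum, TensorProduct.tmul_smul]

end LinearMap.BilinForm

open Algebra in
theorem exists_separabilityIdempotent (k R : Type*) [Field k] [CharZero k] [Ring R] [Algebra k R]
    [FiniteDimensional k R] [IsSemisimpleRing R] :
    ∃ x y : Fin (Module.finrank k R) → R, ∑ i, x i * y i = 1 ∧
      ∀ s : R, ∑ i, (s * x i) ⊗ₜ[k] y i = ∑ i, x i ⊗ₜ[k] (y i * s) := by
  set T := regularTraceForm k R
  have hT : T.Nondegenerate := regularTraceForm_nondegenerate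
  set b := Module.finBasis k R
  set c := T.dualBasis hT b
  have hsep := LinearMap.BilinForm.sum_mul_tmul_dualBasis hT regularTraceForm_mul_left b
  refine ⟨b, c, sub_eq_zero.1 <| hT.1 _ fun z => ?_, hsep⟩
  have htrace : ∑ i, T (c i) (z * b i) = T 1 z := by
    rw [regularTraceForm_apply, one_mul, LinearMap.trace_eq_matrix_trace k b, Matrix.trace]
    simp only [Matrix.diag_apply, LinearMap.toMatrix_apply]
    exact Finset.sum_congr rfl fun i _ =>
      (LinearMap.BilinForm.repr_eq_apply_dualBasis hT b _ i).symm
  have hcasimir := congr_arg (TensorProduct.lift T) (hsep z)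
  simp only [map_sum, TensorProduct.lift.tmul] at hcasimir
  have hsum : T (∑ i, b i * c i) z = T 1 z :=
    calc T (∑ i, b i * c i) z = ∑ i, T (b i) (c i * z) := by
          simp only [map_sum, LinearMap.sum_apply, T, regularTraceForm_mul_left]
      _ = ∑ i, T (c i) (z * b i) := by
          rw [← hcasimir]
          exact Finset.sum_congr rfl fun i _ => regularTraceForm_comm _ _
      _ = T 1 z := htrace
  rw [map_sub, LinearMap.sub_apply, hsum, sub_self]

section Retraction

variable {k R A : Type*} [Ring R] [Ring A] {ι : Type*} [Fintype ι] {x y : ι → R}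

theorem sum_map_mul_map_of_separability [CommRing k] [Algebra k R] [Algebra k A]
    (hsep : ∀ s : R, ∑ i, (s * x i) ⊗ₜ[k] y i = ∑ i, x i ⊗ₜ[k] (y i * s))
    (F G : R →ₗ[k] A) (s : R) :
    ∑ i, F (s * x i) * G (y i) = ∑ i, F (x i) * G (y i * s) := by
  simpa using congr_arg (TensorProduct.lift ((LinearMap.mul k A).compl₁₂ F G)) (hsep s)

theorem AlgHom.exists_bimoduleRetraction [Field k] [Algebra k R] [Algebra k A] (f : R →ₐ[k] A)
    (hxy : ∑ i, x i * y i = 1)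
    (hsep : ∀ s : R, ∑ i, (s * x i) ⊗ₜ[k] y i = ∑ i, x i ⊗ₜ[k] (y i * s)) :
    ∃ ε : A →ₗ[k] A, (∀ w, ε w ∈ Set.range f) ∧ (∀ r, ε (f r) = f r) ∧
      (∀ r w, ε (f r * w) = f r * ε w) ∧ (∀ r w, ε (w * f r) = ε w * f r) := by
  obtain ⟨q, hq⟩ := Submodule.exists_isCompl (LinearMap.range f.toLinearMap)
  set p := Submodule.projection _ q hq
  have hp_mem (w : A) : p w ∈ f.range := Submodule.projection_apply_mem hq w
  have hp_fix (r : R) : p (f r) = f r := Submodule.projection_apply_of_mem_left hq ⟨r, rfl⟩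
  let ε : A →ₗ[k] A := ∑ i, ∑ j,
    LinearMap.mulLeftRight k (f (x j), f (y i)) ∘ₗ p ∘ₗ LinearMap.mulLeftRight k (f (y j), f (x i))
  have hε (w : A) : ε w = ∑ i, ∑ j, f (x j) * (p (f (y j) * (w * f (x i))) * f (y i)) := by
    simp [ε, mul_assoc]
  refine ⟨ε, fun w => ?_, fun r => ?_, fun s w => ?_, fun s w => ?_⟩
  · rw [hε, ← AlgHom.coe_range]
    exact Subalgebra.sum_mem _ fun i _ => Subalgebra.sum_mem _ fun j _ =>
      mul_mem ⟨_, rfl⟩ (mul_mem (hp_mem _) ⟨_, rfl⟩)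
  · rw [hε]
    simp only [← map_mul, hp_fix, ← map_sum]
    congr 1
    simp only [← mul_assoc, ← Finset.sum_mul, hxy, one_mul]
    rw [Finset.sum_congr rfl fun i _ => mul_assoc r _ _, ← Finset.mul_sum, hxy, mul_one]
  · let G (i : ι) : R →ₗ[k] A := LinearMap.mulRight k (f (y i)) ∘ₗ p ∘ₗ
      LinearMap.mulRight k (w * f (x i)) ∘ₗ f.toLinearMap
    calc ε (f s * w) = ∑ i, ∑ j, f (x j) * G i (y j * s) := by simp [hε, G, mul_assoc]
      _ = ∑ i, ∑ j, f (s * x j) * G i (y j) := Finset.sum_congr rfl fun i _ =>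
          (sum_map_mul_map_of_separability hsep f.toLinearMap (G i) s).symm
      _ = f s * ε w := by simp [hε, G, Finset.mul_sum, mul_assoc]
  · let H (j : ι) : R →ₗ[k] A := LinearMap.mulLeft k (f (x j)) ∘ₗ p ∘ₗ
      LinearMap.mulLeft k (f (y j) * w) ∘ₗ f.toLinearMap
    calc ε (w * f s) = ∑ j, ∑ i, H j (s * x i) * f (y i) := by
          rw [hε, Finset.sum_comm]; simp [H, mul_assoc]
      _ = ∑ j, ∑ i, H j (x i) * f (y i * s) := Finset.sum_congr rfl fun j _ =>
          sum_map_mul_map_of_separability hsep (H j) f.toLinearMap s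
      _ = ε w * f s := by rw [hε, Finset.sum_comm]; simp [H, Finset.sum_mul, mul_assoc]

end Retraction

theorem List.prod_ofFn_update_castSucc_mul {M N : Type*} [Mul M] [Monoid N] {n : ℕ}
    (g : Fin (n + 1) → M → N) {s : M} {c : N}
    (hright : ∀ (i : Fin n) x, g i.castSucc (x * s) = g i.castSucc x * c)
    (hleft : ∀ (i : Fin n) x, g i.succ (s * x) = c * g i.succ x)
    (a : Fin (n + 1) → M) (j : Fin n) :
    (List.ofFn fun i => g i (Function.update a j.castSucc (a j.castSucc * s) i)).prod
      = (List.ofFn fun i => g i (Function.update a j.succ (s * a j.succ) i)).prod := by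
  induction n with
  | zero => exact j.elim0
  | succ n ih =>
    have hsplit (b : Fin (n + 2) → M) :
        (List.ofFn fun i => g i (b i)).prod
          = g 0 (b 0) * (List.ofFn fun i => g i.succ (Fin.tail b i)).prod := by
      rw [List.ofFn_succ, List.prod_cons]; rfl
    rw [hsplit, hsplit]
    cases j using Fin.cases with
    | zero =>
      rw [List.ofFn_succ, List.prod_cons, List.ofFn_succ, List.prod_cons]
      have h0 := hright 0 (a 0)
      have h1 := hleft 0 (a 1)
      simp only [Fin.castSucc_zero, Fin.succ_zero_eq_one] at h0 h1 ⊢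
      simp [Fin.tail, Fin.succ_succ_ne_one, h0, h1, mul_assoc]
    | succ j =>
      rw [← Fin.succ_castSucc, Fin.tail_update_succ, Fin.tail_update_succ,
        Function.update_of_ne (Fin.succ_ne_zero _).symm,
        Function.update_of_ne (Fin.succ_ne_zero _).symm]
      exact congr_arg _
        (ih (fun i => g i.succ) (fun i => hright i.succ) (fun i => hleft i.succ) (Fin.tail a) j)

section DifferentialForms

variable {k A W : Type*} [CommRing k] [Ring A] [Algebra k A] [Ring W] [Algebra k W]
  (d : W →ₗ[k] W) (ι : A →ₐ[k] W)

def diffProd {n : ℕ} (a : Fin n → A) : W := (List.ofFn fun j => d (ι (a j))).prod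

variable {d ι}

theorem diffProd_cons {n : ℕ} (a₀ : A) (a : Fin n → A) :
    diffProd d ι (Fin.cons a₀ a : Fin (n + 1) → A) = d (ι a₀) * diffProd d ι a := by
  simp [diffProd, List.ofFn_succ]

theorem diffProd_mem (𝒜 : ℕ → Submodule k W) [SetLike.GradedMonoid 𝒜]
    (hι : ∀ a, ι a ∈ 𝒜 0) (hd : ∀ n, ∀ w ∈ 𝒜 n, d w ∈ 𝒜 (n + 1)) {n : ℕ} (a : Fin n → A) :
    diffProd d ι a ∈ 𝒜 n := by
  induction n with
  | zero => simpa [diffProd] using SetLike.one_mem_graded 𝒜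
  | succ n ih =>
    rw [← Fin.cons_self_tail a, diffProd_cons]
    have := SetLike.mul_mem_graded (hd 0 _ (hι (a 0))) (ih (Fin.tail a))
    rwa [zero_add, add_comm] at this

theorem d_diffProd (hd1 : d 1 = 0) (hdd : ∀ w, d (d w) = 0) {σ : W →ₗ[k] W}
    (hdLeib : ∀ x y : W, d (x * y) = d x * y + σ x * d y) {n : ℕ} (a : Fin n → A) :
    d (diffProd d ι a) = 0 := by
  induction n with
  | zero => simpa [diffProd] using hd1
  | succ n ih =>
    rw [← Fin.cons_self_tail a, diffProd_cons, hdLeib, hdd, ih, zero_mul, mul_zero, add_zero]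

theorem d_mul_diffProd (hd1 : d 1 = 0) (hdd : ∀ w, d (d w) = 0) {σ : W →ₗ[k] W}
    (hdLeib : ∀ x y : W, d (x * y) = d x * y + σ x * d y)
    (hd₀ : ∀ (a : A) (u : W), d (ι a * u) = d (ι a) * u + ι a * d u)
    {n : ℕ} (a₀ : A) (a : Fin n → A) :
    d (ι a₀ * diffProd d ι a) = diffProd d ι (Fin.cons a₀ a : Fin (n + 1) → A) := by
  rw [hd₀, d_diffProd hd1 hdd hdLeib, mul_zero, add_zero, diffProd_cons]

variable (ε : A →ₗ[k] A) (d ι) (m : ℕ)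

def homotopyFactors : Fin (m + 2) → A →ₗ[k] W :=
  Fin.cons (ι.toLinearMap ∘ₗ ε)
    (Fin.cons (ι.toLinearMap ∘ₗ (LinearMap.id - ε)) fun _ => d ∘ₗ ι.toLinearMap)

def homotopyMultilinear : MultilinearMap k (fun _ : Fin (m + 2) => A) W :=
  (MultilinearMap.mkPiAlgebraFin k (m + 2) W).compLinearMap (homotopyFactors d ι ε m)

variable {ε d ι m}

theorem homotopyFactors_mul_right (hd₀ : ∀ (a : A) (u : W), d (ι a * u) = d (ι a) * u + ι a * d u)
    {s : A} (hs : d (ι s) = 0) (hε : ∀ x, ε (x * s) = ε x * s) (i : Fin (m + 2)) (x : A) :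
    homotopyFactors d ι ε m i (x * s) = homotopyFactors d ι ε m i x * ι s := by
  rcases i.eq_zero_or_eq_succ with rfl | ⟨i, rfl⟩
  · simp [homotopyFactors, hε]
  rcases i.eq_zero_or_eq_succ with rfl | ⟨i, rfl⟩
  · simp [homotopyFactors, hε, sub_mul]
  · simp [homotopyFactors, hd₀, hs]

theorem homotopyFactors_mul_left (hd₀ : ∀ (a : A) (u : W), d (ι a * u) = d (ι a) * u + ι a * d u)
    {s : A} (hs : d (ι s) = 0) (hε : ∀ x, ε (s * x) = s * ε x) (i : Fin (m + 1)) (x : A) :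
    homotopyFactors d ι ε m i.succ (s * x) = ι s * homotopyFactors d ι ε m i.succ x := by
  rcases i.eq_zero_or_eq_succ with rfl | ⟨i, rfl⟩
  · simp [homotopyFactors, hε, mul_sub]
  · simp [homotopyFactors, hd₀, hs]

theorem homotopyFactors_eq_zero {s : A} (hs : d (ι s) = 0) (hε : ε s = s) (i : Fin (m + 1)) :
    homotopyFactors d ι ε m i.succ s = 0 := by
  rcases i.eq_zero_or_eq_succ with rfl | ⟨i, rfl⟩
  · simp [homotopyFactors, hε]
  · simp [homotopyFactors, hs]

theorem homotopyMultilinear_apply (a : Fin (m + 2) → A) :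
    homotopyMultilinear d ι ε m a = (List.ofFn fun i => homotopyFactors d ι ε m i (a i)).prod := by
  simp [homotopyMultilinear]

theorem homotopyMultilinear_cons_cons (a₀ a₁ : A) (a : Fin m → A) :
    homotopyMultilinear d ι ε m (Fin.cons a₀ (Fin.cons a₁ a))
      = ι (ε a₀) * (ι (a₁ - ε a₁) * diffProd d ι a) := by
  simp [homotopyMultilinear_apply, List.ofFn_succ, homotopyFactors, diffProd]

theorem homotopyMultilinear_update_mul
    (hd₀ : ∀ (a : A) (u : W), d (ι a * u) = d (ι a) * u + ι a * d u) {s : A}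
    (hs : d (ι s) = 0) (hε_left : ∀ x, ε (s * x) = s * ε x) (hε_right : ∀ x, ε (x * s) = ε x * s)
    (a : Fin (m + 2) → A) (j : Fin (m + 1)) :
    homotopyMultilinear d ι ε m (Function.update a j.castSucc (a j.castSucc * s))
      = homotopyMultilinear d ι ε m (Function.update a j.succ (s * a j.succ)) := by
  simp only [homotopyMultilinear_apply]
  exact List.prod_ofFn_update_castSucc_mul _
    (fun i => homotopyFactors_mul_right hd₀ hs hε_right i.castSucc)
    (homotopyFactors_mul_left hd₀ hs hε_left) a j

theorem homotopyMultilinear_eq_zero (a : Fin (m + 2) → A) (j : Fin (m + 1))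
    (hs : d (ι (a j.succ)) = 0) (hε : ε (a j.succ) = a j.succ) :
    homotopyMultilinear d ι ε m a = 0 := by
  rw [homotopyMultilinear_apply]
  exact List.prod_eq_zero (List.mem_ofFn.2 ⟨j.succ, homotopyFactors_eq_zero hs hε j⟩)

variable (d ι ε m) in
def IsHomotopyOperator (h : W →ₗ[k] W) : Prop :=
  ∀ (a₀ a₁ : A) (a : Fin m → A),
    h (ι a₀ * diffProd d ι (Fin.cons a₁ a)) = ι (ε a₀) * (ι (a₁ - ε a₁) * diffProd d ι a)

theorem IsHomotopyOperator.mem (𝒜 : ℕ → Submodule k W) [SetLike.GradedMonoid 𝒜]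
    (hι : ∀ a, ι a ∈ 𝒜 0) (hd : ∀ n, ∀ w ∈ 𝒜 n, d w ∈ 𝒜 (n + 1)) {h : W →ₗ[k] W}
    (hh : IsHomotopyOperator d ι ε m h) (a₀ : A) (a : Fin (m + 1) → A) :
    h (ι a₀ * diffProd d ι a) ∈ 𝒜 m := by
  rw [← Fin.cons_self_tail a, hh]
  simpa only [zero_add] using SetLike.mul_mem_graded (hι _)
    (SetLike.mul_mem_graded (hι _) (diffProd_mem 𝒜 hι hd _))

theorem d_homotopy_add_homotopy_d (hd1 : d 1 = 0) (hdd : ∀ w, d (d w) = 0) {σ : W →ₗ[k] W}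
    (hdLeib : ∀ x y : W, d (x * y) = d x * y + σ x * d y)
    (hd₀ : ∀ (a : A) (u : W), d (ι a * u) = d (ι a) * u + ι a * d u)
    (hε1 : ε 1 = 1) (hdε : ∀ w, d (ι (ε w)) = 0) {n : ℕ} {h₀ h₁ : W →ₗ[k] W}
    (hh₀ : IsHomotopyOperator d ι ε n h₀) (hh₁ : IsHomotopyOperator d ι ε (n + 1) h₁)
    (a₀ : A) (a : Fin (n + 1) → A) :
    d (h₀ (ι a₀ * diffProd d ι a)) + h₁ (d (ι a₀ * diffProd d ι a)) = ι a₀ * diffProd d ι a := by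
  have hh₁' : h₁ (diffProd d ι (Fin.cons a₀ a)) = ι (a₀ - ε a₀) * diffProd d ι a := by
    simpa [hε1] using hh₁ 1 a₀ a
  have hdh₀ : d (ι (ε a₀) * (ι (a 0 - ε (a 0)) * diffProd d ι (Fin.tail a)))
      = ι (ε a₀) * diffProd d ι a := by
    rw [hd₀, hdε, zero_mul, zero_add, d_mul_diffProd hd1 hdd hdLeib hd₀, diffProd_cons,
      map_sub, map_sub, hdε, sub_zero, ← diffProd_cons, Fin.cons_self_tail]
  rw [← Fin.cons_self_tail a, hh₀, Fin.cons_self_tail, hdh₀, d_mul_diffProd hd1 hdd hdLeib hd₀,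
    hh₁', map_sub, sub_mul, add_sub_cancel]

end DifferentialForms

end

/-- `(W, 𝒜, ιA, d, σ)` is the algebra `Ω•_R A` of relative noncommutative differential forms:
every `n`-form is a combination of forms `a₀ da₁ ⋯ daₙ` (`hspan`), and linear maps out of `𝒜 n`
correspond to `R`-balanced multilinear maps vanishing when one of the last `n` arguments lies in
`R` (`huniv`), i.e. `Ω^n_R A ≅ A ⊗_R (A/R)^{⊗_R n}`. -/
theorem stmt7 (k R A W : Type u) [Field k] [CharZero k]
    [Ring R] [Algebra k R] [FiniteDimensional k R] [IsSemisimpleRing R]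
    [Ring A] [Algebra k A] (f : R →ₐ[k] A)
    [Ring W] [Algebra k W]
    (𝒜 : ℕ → Submodule k W) [GradedAlgebra 𝒜]
    (ιA : A →ₐ[k] W) (d σ : W →ₗ[k] W)
    (hι0 : ∀ a : A, ιA a ∈ 𝒜 0)
    (hdg : ∀ (n : ℕ), ∀ w ∈ 𝒜 n, d w ∈ 𝒜 (n + 1))
    (hσ : ∀ (n : ℕ), ∀ w ∈ 𝒜 n, σ w = ((-1 : k) ^ n) • w)
    (hdd : ∀ w : W, d (d w) = 0)
    (hdLeib : ∀ x y : W, d (x * y) = d x * y + σ x * d y)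
    (hdR : ∀ r : R, d (ιA (f r)) = 0)
    (hspan : ∀ n : ℕ, 𝒜 n ≤ Submodule.span k
        {w : W | ∃ a : Fin (n + 1) → A,
          w = ιA (a 0) * (List.ofFn fun j : Fin n => d (ιA (a j.succ))).prod})
    (huniv : ∀ (n : ℕ) (V : Type u), ∀ (_ : AddCommGroup V) (_ : Module k V),
      ∀ φ : MultilinearMap k (fun _ : Fin (n + 1) => A) V,
        (∀ (a : Fin (n + 1) → A) (j : Fin n) (r : R),
            φ (Function.update a j.castSucc (a j.castSucc * f r))
              = φ (Function.update a j.succ (f r * a j.succ))) →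
        (∀ (a : Fin (n + 1) → A) (j : Fin n), a j.succ ∈ Set.range f → φ a = 0) →
        ∃! Φ : W →ₗ[k] V,
          (∀ a : Fin (n + 1) → A,
            Φ (ιA (a 0) * (List.ofFn fun j : Fin n => d (ιA (a j.succ))).prod) = φ a) ∧
          (∀ m : ℕ, m ≠ n → ∀ w ∈ 𝒜 m, Φ w = 0)) :
    ∀ (n : ℕ), ∀ ω ∈ 𝒜 (n + 1), d ω = 0 → ∃ η ∈ 𝒜 n, d η = ω := by
  obtain ⟨x, y, hxy, hsep⟩ := exists_separabilityIdempotent k R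
  obtain ⟨ε, hε_range, hε_fix, hε_left, hε_right⟩ := f.exists_bimoduleRetraction hxy hsep
  have hd₀ (a : A) (u : W) : d (ιA a * u) = d (ιA a) * u + ιA a * d u := by
    rw [hdLeib, hσ 0 _ (hι0 a), pow_zero, one_smul]
  have hd1 : d 1 = 0 := by simpa using hdR 1
  have hdε (w : A) : d (ιA (ε w)) = 0 := by
    obtain ⟨r, hr⟩ := hε_range w
    rw [← hr, hdR]
  have homotopy (m : ℕ) : ∃ h, IsHomotopyOperator d ιA ε m h := by
    obtain ⟨h, ⟨hh, -⟩, -⟩ := huniv (m + 1) W _ _ (homotopyMultilinear d ιA ε m)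
      (fun a j r => homotopyMultilinear_update_mul hd₀ (hdR r) (hε_left r) (hε_right r) a j)
      (fun a j ⟨r, hr⟩ => homotopyMultilinear_eq_zero a j (hr ▸ hdR r) (hr ▸ hε_fix r))
    exact ⟨h, fun a₀ a₁ a =>
      (hh (Fin.cons a₀ (Fin.cons a₁ a))).trans (homotopyMultilinear_cons_cons a₀ a₁ a)⟩
  intro n ω hω hdω
  obtain ⟨h₀, hh₀⟩ := homotopy n
  obtain ⟨h₁, hh₁⟩ := homotopy (n + 1)
  have hgen : 𝒜 (n + 1) ≤ (𝒜 n).comap h₀ ⊓ LinearMap.ker (d ∘ₗ h₀ + h₁ ∘ₗ d - LinearMap.id) := by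
    refine (hspan (n + 1)).trans (Submodule.span_le.2 ?_)
    rintro _ ⟨a, rfl⟩
    exact ⟨hh₀.mem 𝒜 hι0 hdg (a 0) (Fin.tail a), sub_eq_zero.2 <| d_homotopy_add_homotopy_d
      hd1 hdd hdLeib hd₀ (by simpa using hε_fix 1) hdε hh₀ hh₁ (a 0) (Fin.tail a)⟩
  obtain ⟨hmem, hker⟩ := hgen hω
  exact ⟨h₀ ω, hmem, by simpa [hdω, sub_eq_zero] using hker⟩
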